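/- Let W be an n×n symmetric entrywise nonnegative real matrix with graph Laplacian L(W) = diag(W 1_n) − W, partitioned in blocks L₁ (l×l), L₂ (l×(n−l)), L₂ᵀ, L₃ ((n−l)×(n−l)) as L(W) = [[L₁, L₂],[L₂ᵀ, L₃]], and let λ₂ > 0, F_l ∈ ℝ^{l×c}, and Y_u ∈ ℝ^{(n−l)×c}. Then 2L₃ + λ₂ I_{n−l} is symmetric positive definite, and F_u ∈ ℝ^{(n−l)×c} minimizes the objective g(F_u) = trace(Fᵀ L(W) F) + (λ₂/2)‖F_u − Y_u‖²_F, where F = [F_l; F_u] stacks F_l on top of F_u, if and only if (2L₃ + λ₂ I_{n−l}) F_u = λ₂ Y_u − 2 L₂ᵀ F_l; in particular the minimizer is unique. -/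

import Mathlib

/-!
The Laplacian `L(W)` is positive semidefinite because `xᵀ L(W) x = ½ ∑ᵢⱼ Wᵢⱼ (xᵢ - xⱼ)²`, so its
principal block `L₃` is too, and `A = 2L₃ + λ₂I` is positive definite. Expanding the block product
shows `g(F_u) = ½ tr(F_uᵀ A F_u) - tr(F_uᵀ B) + const` with `B = λ₂Y_u - 2L₂ᵀF_l`, and completing
the square around `X₀ = A⁻¹B` gives `g(F_u) = ½ tr((F_u - X₀)ᵀ A (F_u - X₀)) + const`, which is
minimal exactly at `F_u = X₀`.
-/

open Matrix

namespace Matrix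

variable {ι l m c R : Type*} [Fintype ι] [Fintype m] [Fintype c]

def laplacian [DecidableEq ι] [AddCommGroup R] (W : Matrix ι ι R) : Matrix ι ι R :=
  diagonal (fun i => ∑ j, W i j) - W

theorem isSymm_laplacian [DecidableEq ι] [AddCommGroup R] {W : Matrix ι ι R} (hW : W.IsSymm) :
    W.laplacian.IsSymm :=
  (isSymm_diagonal _).sub hW

theorem dotProduct_laplacian_mulVec [DecidableEq ι] {W : Matrix ι ι ℝ} (hW : W.IsSymm)
    (x : ι → ℝ) : x ⬝ᵥ W.laplacian *ᵥ x = (∑ i, ∑ j, W i j * (x i - x j) ^ 2) / 2 := by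
  have hform : x ⬝ᵥ W.laplacian *ᵥ x =
      ∑ i, ∑ j, W i j * x i ^ 2 - ∑ i, ∑ j, W i j * x i * x j := by
    rw [laplacian, sub_mulVec, dotProduct_sub]
    simp only [dotProduct, mulVec_diagonal]
    simp only [mulVec, dotProduct, Finset.mul_sum, Finset.sum_mul]
    congr 1 <;> exact Finset.sum_congr rfl fun i _ => Finset.sum_congr rfl fun j _ => by ring
  have hsq : ∑ i, ∑ j, W i j * (x i - x j) ^ 2 =
      ∑ i, ∑ j, W i j * x i ^ 2 + ∑ i, ∑ j, W i j * x j ^ 2 -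
        2 * ∑ i, ∑ j, W i j * x i * x j := by
    simp only [Finset.mul_sum, ← Finset.sum_add_distrib, ← Finset.sum_sub_distrib]
    exact Finset.sum_congr rfl fun i _ => Finset.sum_congr rfl fun j _ => by ring
  have hswap : ∑ i, ∑ j, W i j * x j ^ 2 = ∑ i, ∑ j, W i j * x i ^ 2 := by
    rw [Finset.sum_comm]
    simp_rw [hW.apply]
  rw [hform, hsq, hswap]
  ring

theorem posSemidef_laplacian [DecidableEq ι] {W : Matrix ι ι ℝ} (hW : W.IsSymm)
    (hW₀ : ∀ i j, 0 ≤ W i j) : W.laplacian.PosSemidef := by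
  refine PosSemidef.of_dotProduct_mulVec_nonneg ?_ fun x => ?_
  · simpa [IsHermitian, conjTranspose_eq_transpose_of_trivial] using (isSymm_laplacian hW).eq
  · rw [star_trivial, dotProduct_laplacian_mulVec hW]
    exact div_nonneg (Finset.sum_nonneg fun i _ => Finset.sum_nonneg fun j _ =>
      mul_nonneg (hW₀ i j) (sq_nonneg _)) zero_le_two

omit [Fintype m] in
theorem PosSemidef.toBlocks₂₂ [Ring R] [PartialOrder R] [StarRing R]
    {M : Matrix (l ⊕ m) (l ⊕ m) R} (hM : M.PosSemidef) : M.toBlocks₂₂.PosSemidef :=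
  hM.submatrix Sum.inr

theorem trace_transpose_fromRows_mul_mul_fromRows [Fintype l] [CommRing R]
    {L : Matrix (l ⊕ m) (l ⊕ m) R} (hL : L.IsSymm) (X : Matrix l c R) (Y : Matrix m c R) :
    trace ((fromRows X Y)ᵀ * L * fromRows X Y) =
      trace (Xᵀ * L.toBlocks₁₁ * X) + 2 * trace (Yᵀ * (L.toBlocks₁₂ᵀ * X)) +
        trace (Yᵀ * L.toBlocks₂₂ * Y) := by
  have h₂₁ : L.toBlocks₂₁ = L.toBlocks₁₂ᵀ := by
    rw [← fromBlocks_toBlocks L, isSymm_fromBlocks_iff] at hL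
    exact hL.2.1.symm
  have hcross : trace (Xᵀ * (L.toBlocks₁₂ * Y)) = trace (Yᵀ * (L.toBlocks₁₂ᵀ * X)) := by
    rw [← trace_transpose]
    simp [transpose_mul, Matrix.mul_assoc]
  conv_lhs => rw [← fromBlocks_toBlocks L]
  rw [Matrix.mul_assoc, h₂₁, fromBlocks_mul_fromRows, transpose_fromRows, fromCols_mul_fromRows]
  simp only [Matrix.mul_add, trace_add, hcross, Matrix.mul_assoc]
  ring

theorem sum_sum_sq_eq_trace_transpose_mul_self [CommRing R] (X : Matrix m c R) :
    ∑ i, ∑ j, X i j ^ 2 = trace (Xᵀ * X) := by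
  simp only [trace, diag_apply, mul_apply, transpose_apply, sq]
  exact Finset.sum_comm

theorem IsSymm.trace_quadratic_complete_square [CommRing R] {A : Matrix m m R} (hA : A.IsSymm)
    {X₀ B : Matrix m c R} (hX₀ : A * X₀ = B) (Y : Matrix m c R) :
    trace (Yᵀ * A * Y) - 2 * trace (Yᵀ * B) =
      trace ((Y - X₀)ᵀ * A * (Y - X₀)) - trace (X₀ᵀ * A * X₀) := by
  have hcross : trace (X₀ᵀ * (A * Y)) = trace (Yᵀ * (A * X₀)) := by
    rw [← trace_transpose]
    simp [transpose_mul, hA.eq, Matrix.mul_assoc]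
  simp only [← hX₀, transpose_sub, Matrix.sub_mul, Matrix.mul_sub, trace_sub, Matrix.mul_assoc,
    hcross]
  ring

omit [Fintype c] in
theorem diag_transpose_mul_mul [CommRing R] (A : Matrix m m R) (D : Matrix m c R) (j : c) :
    (Dᵀ * A * D).diag j = Dᵀ j ⬝ᵥ A *ᵥ Dᵀ j := by
  simp only [diag_apply, mul_apply, dotProduct, mulVec, transpose_apply, Finset.sum_mul,
    Finset.mul_sum]
  rw [Finset.sum_comm]
  exact Finset.sum_congr rfl fun i _ => Finset.sum_congr rfl fun k _ => by ring

theorem PosSemidef.trace_transpose_mul_mul_nonneg {A : Matrix m m ℝ} (hA : A.PosSemidef)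
    (D : Matrix m c ℝ) : 0 ≤ trace (Dᵀ * A * D) := by
  simpa [conjTranspose_eq_transpose_of_trivial] using
    (hA.conjTranspose_mul_mul_same D).trace_nonneg

theorem PosDef.trace_transpose_mul_mul_eq_zero_iff {A : Matrix m m ℝ} (hA : A.PosDef)
    (D : Matrix m c ℝ) : trace (Dᵀ * A * D) = 0 ↔ D = 0 := by
  refine ⟨fun hD => ?_, fun hD => by simp [hD]⟩
  have hPSD := hA.posSemidef.conjTranspose_mul_mul_same D
  rw [conjTranspose_eq_transpose_of_trivial] at hPSD
  have hzero := hPSD.trace_eq_zero_iff.mp hD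
  ext i j
  by_contra hij
  have hcol : Dᵀ j ≠ 0 := fun h => hij (congrFun h i)
  have hpos := hA.dotProduct_mulVec_pos hcol
  rw [star_trivial, ← diag_transpose_mul_mul, hzero] at hpos
  exact hpos.false

theorem PosDef.forall_le_iff_mul_eq [DecidableEq m] {A : Matrix m m ℝ} (hA : A.PosDef)
    (B : Matrix m c ℝ) {f : Matrix m c ℝ → ℝ} {k : ℝ}
    (hf : ∀ X, f X = trace (Xᵀ * A * X) / 2 - trace (Xᵀ * B) + k) (X : Matrix m c ℝ) :
    (∀ Y, f X ≤ f Y) ↔ A * X = B := by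
  have hdet : IsUnit A.det := (isUnit_iff_isUnit_det A).mp hA.isUnit
  set X₀ := A⁻¹ * B with hX₀_def
  have hX₀ : A * X₀ = B := mul_nonsing_inv_cancel_left A B hdet
  have hA_symm : A.IsSymm := by
    simpa [IsSymm, conjTranspose_eq_transpose_of_trivial] using hA.isHermitian.eq
  have hsquare : ∀ Y, f Y =
      trace ((Y - X₀)ᵀ * A * (Y - X₀)) / 2 + (k - trace (X₀ᵀ * A * X₀) / 2) := fun Y => by
    linarith [hf Y, hA_symm.trace_quadratic_complete_square hX₀ Y]
  have hnonneg := hA.posSemidef.trace_transpose_mul_mul_nonneg (c := c)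
  have hmin_iff : (∀ Y, f X ≤ f Y) ↔ trace ((X - X₀)ᵀ * A * (X - X₀)) = 0 := by
    simp only [hsquare, add_le_add_iff_right]
    refine ⟨fun h => le_antisymm ?_ (hnonneg _), fun h Y => ?_⟩
    · have hX₀_le := h X₀
      rw [sub_self, transpose_zero, Matrix.zero_mul, Matrix.zero_mul, trace_zero] at hX₀_le
      linarith
    · rw [h, zero_div]
      exact div_nonneg (hnonneg _) zero_le_two
  rw [hmin_iff, hA.trace_transpose_mul_mul_eq_zero_iff, sub_eq_zero]
  exact ⟨fun h => h ▸ hX₀, fun h => by rw [hX₀_def, ← h, nonsing_inv_mul_cancel_left A X hdet]⟩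

end Matrix

theorem lgc_based_label_inference_general
    (l m c : ℕ)
    (W : Matrix (Fin l ⊕ Fin m) (Fin l ⊕ Fin m) ℝ)
    (hWsym : Wᵀ = W) (hWnn : ∀ i j, 0 ≤ W i j)
    (LW : Matrix (Fin l ⊕ Fin m) (Fin l ⊕ Fin m) ℝ)
    (hLW : LW = Matrix.diagonal (fun i => ∑ j, W i j) - W)
    (L₂ : Matrix (Fin l) (Fin m) ℝ) (hL₂ : L₂ = LW.toBlocks₁₂)
    (L₃ : Matrix (Fin m) (Fin m) ℝ) (hL₃ : L₃ = LW.toBlocks₂₂)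
    (lam2 : ℝ) (hlam2 : 0 < lam2)
    (Fl : Matrix (Fin l) (Fin c) ℝ) (Yu : Matrix (Fin m) (Fin c) ℝ)
    (g : Matrix (Fin m) (Fin c) ℝ → ℝ)
    (hg : ∀ Fu, g Fu =
      Matrix.trace ((Matrix.fromRows Fl Fu)ᵀ * LW * Matrix.fromRows Fl Fu) +
        lam2 / 2 * ∑ i, ∑ j, (Fu i j - Yu i j) ^ 2) :
    (2 • L₃ + lam2 • (1 : Matrix (Fin m) (Fin m) ℝ)).PosDef ∧
    (∀ Fu : Matrix (Fin m) (Fin c) ℝ,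
      (∀ Fu' : Matrix (Fin m) (Fin c) ℝ, g Fu ≤ g Fu') ↔
        (2 • L₃ + lam2 • (1 : Matrix (Fin m) (Fin m) ℝ)) * Fu =
          lam2 • Yu - 2 • (L₂ᵀ * Fl)) ∧
    (∀ Fu Fu' : Matrix (Fin m) (Fin c) ℝ,
      (∀ F' : Matrix (Fin m) (Fin c) ℝ, g Fu ≤ g F') →
      (∀ F' : Matrix (Fin m) (Fin c) ℝ, g Fu' ≤ g F') →
      Fu = Fu') := by
  obtain rfl : LW = W.laplacian := hLW
  subst hL₂ hL₃
  set A := 2 • W.laplacian.toBlocks₂₂ + lam2 • (1 : Matrix (Fin m) (Fin m) ℝ)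
  have hA : A.PosDef :=
    PosDef.posSemidef_add ((posSemidef_laplacian hWsym hWnn).toBlocks₂₂.smul (by norm_num))
      (PosDef.one.smul hlam2)
  have hg_quadratic : ∀ Fu, g Fu =
      trace (Fuᵀ * A * Fu) / 2 - trace (Fuᵀ * (lam2 • Yu - 2 • (W.laplacian.toBlocks₁₂ᵀ * Fl))) +
        (trace (Flᵀ * W.laplacian.toBlocks₁₁ * Fl) + lam2 / 2 * trace (Yuᵀ * Yu)) := by
    intro Fu
    have hdist := sum_sum_sq_eq_trace_transpose_mul_self (Fu - Yu)
    have hYF : trace (Yuᵀ * Fu) = trace (Fuᵀ * Yu) := by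
      rw [← trace_transpose, transpose_mul, transpose_transpose]
    simp only [Matrix.sub_apply] at hdist
    rw [hg, trace_transpose_fromRows_mul_mul_fromRows (isSymm_laplacian hWsym), hdist]
    simp only [A, two_nsmul, transpose_sub, Matrix.sub_mul, Matrix.mul_sub, Matrix.add_mul,
      Matrix.mul_add, Matrix.smul_mul, Matrix.mul_smul, Matrix.mul_one, trace_add, trace_sub,
      trace_smul, smul_eq_mul, hYF, Matrix.mul_assoc]
    ring
  have hmin := hA.forall_le_iff_mul_eq _ hg_quadratic
  refine ⟨hA, hmin, fun Fu Fu' hFu hFu' => ?_⟩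
  let := hA.isUnit.invertible
  exact (Matrix.mul_right_inj_of_invertible A).mp
    (((hmin Fu).mp hFu).trans ((hmin Fu').mp hFu').symm)

/-- Let `W` be an `n × n` (`n = l + m`, `m = n - l > 0`) symmetric entrywise
nonnegative real matrix with graph Laplacian `L(W) = diag(W 1ₙ) - W` partitioned in blocks
`[[L₁, L₂], [L₂ᵀ, L₃]]`, and let `λ₂ > 0`, `F_l ∈ ℝ^{l×c}`, `Y_u ∈ ℝ^{(n-l)×c}`.  Then
`2L₃ + λ₂ I` is symmetric positive definite, and `F_u` minimizes
`g(F_u) = trace(Fᵀ L(W) F) + (λ₂/2)‖F_u - Y_u‖²_F` (where `F = [F_l; F_u]`) if and only if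
`(2L₃ + λ₂ I) F_u = λ₂ Y_u - 2 L₂ᵀ F_l`; in particular the minimizer is unique. -/
theorem lgc_based_label_inference
    (l m c : ℕ) (hm : 0 < m)
    (W : Matrix (Fin l ⊕ Fin m) (Fin l ⊕ Fin m) ℝ)
    (hWsym : Wᵀ = W) (hWnn : ∀ i j, 0 ≤ W i j)
    (LW : Matrix (Fin l ⊕ Fin m) (Fin l ⊕ Fin m) ℝ)
    (hLW : LW = Matrix.diagonal (fun i => ∑ j, W i j) - W)
    (L₂ : Matrix (Fin l) (Fin m) ℝ) (hL₂ : L₂ = LW.toBlocks₁₂)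
    (L₃ : Matrix (Fin m) (Fin m) ℝ) (hL₃ : L₃ = LW.toBlocks₂₂)
    (lam2 : ℝ) (hlam2 : 0 < lam2)
    (Fl : Matrix (Fin l) (Fin c) ℝ) (Yu : Matrix (Fin m) (Fin c) ℝ)
    (g : Matrix (Fin m) (Fin c) ℝ → ℝ)
    (hg : ∀ Fu, g Fu =
      Matrix.trace ((Matrix.fromRows Fl Fu)ᵀ * LW * Matrix.fromRows Fl Fu) +
        lam2 / 2 * ∑ i, ∑ j, (Fu i j - Yu i j) ^ 2) :
    (2 • L₃ + lam2 • (1 : Matrix (Fin m) (Fin m) ℝ)).PosDef ∧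
    (∀ Fu : Matrix (Fin m) (Fin c) ℝ,
      (∀ Fu' : Matrix (Fin m) (Fin c) ℝ, g Fu ≤ g Fu') ↔
        (2 • L₃ + lam2 • (1 : Matrix (Fin m) (Fin m) ℝ)) * Fu =
          lam2 • Yu - 2 • (L₂ᵀ * Fl)) ∧
    (∀ Fu Fu' : Matrix (Fin m) (Fin c) ℝ,
      (∀ F' : Matrix (Fin m) (Fin c) ℝ, g Fu ≤ g F') →
      (∀ F' : Matrix (Fin m) (Fin c) ℝ, g Fu' ≤ g F') →
      Fu = Fu') :=
  lgc_based_label_inference_general l m c W hWsym hWnn LW hLW L₂ hL₂ L₃ hL₃ lam2 hlam2 Fl Yu g hg
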